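/- For every real x > 0 and every real t > 0, the limit lim_{ε→0⁺} (√(ε − it)/(2√π)) ∫₀^∞ e^{(it−ε)(rx + 1/(4r))} r^{-3/2} dr exists and equals e^{it√x}, where √(ε−it) is the principal branch of the complex square root and each integral (for ε > 0) is absolutely convergent. -/

import Mathlib

open MeasureTheory Real Set Complex Filter Topology

/-!
With `y = ε - it`, `Re y > 0`, the substitution `r = v⁻²` turns the integral into
`2 e^{-y√x} ∫₀^∞ e^{-y (v/2 - √x/v)²} dv`, because `x/v² + v²/4 = √x + (v/2 - √x/v)²`.
By the Cauchy–Schlömilch transformation `∫₀^∞ f (a v - c/v) dv = (2a)⁻¹ ∫_ℝ f` (for even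
integrable `f`), this is `2 e^{-y√x} (π/y)^{1/2}`, and `y^{1/2} (π/y)^{1/2} = √π`. So the
subordination formula holds exactly for every `ε > 0`, and the limit `ε → 0⁺` is continuity of
`ε ↦ e^{-(ε - it)√x}`.
-/

section CauchySchlomilch

variable {E : Type*} [NormedAddCommGroup E] [NormedSpace ℝ E] {a c : ℝ}

theorem integral_Ioi_comp_const_div {k : ℝ} (hk : 0 < k) (g : ℝ → E) :
    ∫ u in Ioi 0, (k / u ^ 2) • g (k / u) = ∫ u in Ioi 0, g u := by
  have hderiv : ∀ u ∈ Ioi (0 : ℝ),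
      HasDerivWithinAt (fun u => k / u) (-(k / u ^ 2)) (Ioi 0) u := by
    intro u hu
    have := (hasDerivAt_inv (mem_Ioi.1 hu).ne').const_mul k
    simp only [mul_neg, ← div_eq_mul_inv] at this
    exact this.hasDerivWithinAt
  have hinj : InjOn (fun u : ℝ => k / u) (Ioi 0) := fun u _ v _ h => by
    simpa [div_div_cancel₀ hk.ne'] using congrArg (k / ·) h
  have himage : (fun u : ℝ => k / u) '' Ioi 0 = Ioi 0 := by
    refine Subset.antisymm (image_subset_iff.2 fun u hu => div_pos hk hu) fun v hv => ?_
    exact ⟨k / v, div_pos hk hv, div_div_cancel₀ hk.ne'⟩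
  have := integral_image_eq_integral_abs_deriv_smul measurableSet_Ioi hderiv hinj g
  rw [himage] at this
  rw [this]
  refine setIntegral_congr_fun measurableSet_Ioi fun u hu => ?_
  rw [abs_neg, abs_of_pos (div_pos hk (pow_pos hu 2))]

theorem hasDerivAt_mul_sub_div {u : ℝ} (hu : u ≠ 0) :
    HasDerivAt (fun u => a * u - c / u) (a + c / u ^ 2) u := by
  have := ((hasDerivAt_id u).const_mul a).sub ((hasDerivAt_inv hu).const_mul c)
  simp only [id, mul_one, mul_neg, sub_neg_eq_add, ← div_eq_mul_inv] at this
  exact this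

theorem strictMonoOn_mul_sub_div (ha : 0 < a) (hc : 0 < c) :
    StrictMonoOn (fun u => a * u - c / u) (Ioi 0) := fun u hu v _ huv => by
  have : c / v < c / u := div_lt_div_of_pos_left hc hu huv
  dsimp only
  nlinarith

theorem image_Ioi_mul_sub_div (ha : 0 < a) (hc : 0 < c) :
    (fun u => a * u - c / u) '' Ioi 0 = univ := by
  refine eq_univ_of_forall fun w => ?_
  -- the positive root of `a u² - w u - c`
  set s := √(w ^ 2 + 4 * a * c)
  have hs2 : s ^ 2 = w ^ 2 + 4 * a * c := sq_sqrt (by positivity)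
  have hws : |w| < s := by
    rw [← sqrt_sq_eq_abs]
    exact sqrt_lt_sqrt (sq_nonneg w) (by nlinarith)
  have hpos : 0 < w + s := by linarith [neg_abs_le w]
  refine ⟨(w + s) / (2 * a), div_pos hpos (by positivity), ?_⟩
  field_simp
  nlinarith

theorem integrableOn_Ioi_deriv_smul_comp_mul_sub_div_iff (ha : 0 < a) (hc : 0 < c) (f : ℝ → E) :
    IntegrableOn (fun u => (a + c / u ^ 2) • f (a * u - c / u)) (Ioi 0) ↔ Integrable f := by
  rw [← integrableOn_univ, ← image_Ioi_mul_sub_div ha hc,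
    integrableOn_image_iff_integrableOn_abs_deriv_smul measurableSet_Ioi
      (fun u hu => (hasDerivAt_mul_sub_div (mem_Ioi.1 hu).ne').hasDerivWithinAt)
      (strictMonoOn_mul_sub_div ha hc).injOn]
  refine integrableOn_congr_fun (fun u hu => ?_) measurableSet_Ioi
  rw [abs_of_pos (by have := mem_Ioi.1 hu; positivity)]

theorem integral_Ioi_deriv_smul_comp_mul_sub_div (ha : 0 < a) (hc : 0 < c) (f : ℝ → E) :
    ∫ u in Ioi 0, (a + c / u ^ 2) • f (a * u - c / u) = ∫ w, f w := by
  calc ∫ u in Ioi 0, (a + c / u ^ 2) • f (a * u - c / u)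
      = ∫ u in Ioi 0, |a + c / u ^ 2| • f (a * u - c / u) :=
        setIntegral_congr_fun measurableSet_Ioi fun u hu => by
          rw [abs_of_pos (by have := mem_Ioi.1 hu; positivity)]
    _ = ∫ w in (fun u => a * u - c / u) '' Ioi 0, f w :=
        (integral_image_eq_integral_abs_deriv_smul measurableSet_Ioi
          (fun u hu => (hasDerivAt_mul_sub_div (mem_Ioi.1 hu).ne').hasDerivWithinAt)
          (strictMonoOn_mul_sub_div ha hc).injOn f).symm
    _ = ∫ w, f w := by rw [image_Ioi_mul_sub_div ha hc, setIntegral_univ]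

theorem MeasureTheory.Integrable.integrableOn_Ioi_comp_mul_sub_div {f : ℝ → E}
    (hf : Integrable f) (ha : 0 < a) (hc : 0 < c) :
    IntegrableOn (fun u => f (a * u - c / u)) (Ioi 0) := by
  have hD := (integrableOn_Ioi_deriv_smul_comp_mul_sub_div_iff ha hc f).2 hf
  have hbound : ∀ᵐ u ∂volume.restrict (Ioi 0), ‖(a + c / u ^ 2)⁻¹‖ ≤ a⁻¹ := by
    filter_upwards [ae_restrict_mem measurableSet_Ioi] with u hu
    have := mem_Ioi.1 hu
    rw [norm_inv, Real.norm_of_nonneg (by positivity)]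
    exact inv_anti₀ ha (by simp only [le_add_iff_nonneg_right]; positivity)
  have hmeas : AEStronglyMeasurable (fun u : ℝ => (a + c / u ^ 2)⁻¹) (volume.restrict (Ioi 0)) :=
    Measurable.aestronglyMeasurable (by fun_prop)
  refine IntegrableOn.congr_fun (hD.bdd_smul a⁻¹ hmeas hbound) (fun u hu => ?_) measurableSet_Ioi
  have := mem_Ioi.1 hu
  simp only [Pi.smul_apply', smul_smul]
  rw [inv_mul_cancel₀ (by positivity), one_smul]

theorem integral_Ioi_div_sq_smul_comp_mul_sub_div (ha : 0 < a) (hc : 0 < c) {f : ℝ → E}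
    (hf_even : ∀ w, f (-w) = f w) :
    ∫ u in Ioi 0, (c / u ^ 2) • f (a * u - c / u) = a • ∫ u in Ioi 0, f (a * u - c / u) := by
  -- the inversion `u ↦ c / (a u)` fixes `Ioi 0` and negates `a u - c / u`
  rw [← integral_Ioi_comp_const_div (div_pos hc ha), ← integral_smul]
  refine setIntegral_congr_fun measurableSet_Ioi fun u hu => ?_
  have := mem_Ioi.1 hu
  have hneg : a * (c / a / u) - c / (c / a / u) = -(a * u - c / u) := by
    field_simp
    ring
  rw [hneg, hf_even, smul_smul]
  congr 1
  field_simp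

theorem integral_Ioi_comp_mul_sub_div (ha : 0 < a) (hc : 0 < c) {f : ℝ → E}
    (hf : Integrable f) (hf_even : ∀ w, f (-w) = f w) :
    ∫ u in Ioi 0, f (a * u - c / u) = (2 * a)⁻¹ • ∫ w, f w := by
  set I := ∫ u in Ioi 0, f (a * u - c / u)
  have hFa : IntegrableOn (fun u => a • f (a * u - c / u)) (Ioi 0) :=
    (hf.integrableOn_Ioi_comp_mul_sub_div ha hc).smul a
  have hsplit : a • I = (∫ w, f w) - a • I := calc
    a • I = ∫ u in Ioi 0, (c / u ^ 2) • f (a * u - c / u) :=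
      (integral_Ioi_div_sq_smul_comp_mul_sub_div ha hc hf_even).symm
    _ = ∫ u in Ioi 0, ((a + c / u ^ 2) • f (a * u - c / u) - a • f (a * u - c / u)) := by
      simp only [add_smul, add_sub_cancel_left]
    _ = (∫ w, f w) - a • I := by
      rw [integral_sub ((integrableOn_Ioi_deriv_smul_comp_mul_sub_div_iff ha hc f).2 hf) hFa,
        integral_Ioi_deriv_smul_comp_mul_sub_div ha hc f, integral_smul]
  rw [eq_sub_iff_add_eq, ← add_smul, ← two_mul] at hsplit
  rw [← hsplit, smul_smul, inv_mul_cancel₀ (by positivity), one_smul]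

end CauchySchlomilch

theorem cpow_mul_ofReal_div_cpow {r : ℝ} (hr : 0 < r) {y : ℂ} (hy : y ≠ 0) (harg : y.arg ≠ π)
    (w : ℂ) : y ^ w * ((r : ℂ) / y) ^ w = (r : ℂ) ^ w := by
  have hr' : (r : ℂ) ≠ 0 := ofReal_ne_zero.2 hr.ne'
  rw [cpow_def_of_ne_zero hy, cpow_def_of_ne_zero (div_ne_zero hr' hy), cpow_def_of_ne_zero hr',
    ← Complex.exp_add, div_eq_mul_inv, log_ofReal_mul hr (inv_ne_zero hy), log_inv y harg,
    ofReal_log hr.le]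
  ring_nf

theorem cpow_half_mul_pi_div_cpow_half {y : ℂ} (hy : 0 < y.re) :
    y ^ (1 / 2 : ℂ) * ((π : ℂ) / y) ^ (1 / 2 : ℂ) = (√π : ℂ) := by
  have hy0 : y ≠ 0 := fun h => by simp [h] at hy
  have harg : y.arg ≠ π := fun h => by linarith [(arg_eq_pi_iff.1 h).1]
  rw [cpow_mul_ofReal_div_cpow pi_pos hy0 harg, sqrt_eq_rpow, ofReal_cpow pi_pos.le]
  norm_num

noncomputable def subordinationIntegrand (y : ℂ) (x r : ℝ) : ℂ :=
  cexp (-y * ((r * x : ℝ) + 1 / (4 * r))) * ((r ^ (-(3 : ℝ) / 2) : ℝ) : ℂ)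

theorem subordinationIntegrand_rpow_neg_two {x : ℝ} (hx : 0 ≤ x) (y : ℂ) {v : ℝ} (hv : 0 < v) :
    (|(-2 : ℝ)| * v ^ ((-2 : ℝ) - 1)) • subordinationIntegrand y x (v ^ (-2 : ℝ)) =
      (2 * cexp (-y * √x)) • cexp (-y * ((1 / 2 * v - √x / v : ℝ) : ℂ) ^ 2) := by
  have hv2 : v ^ (-2 : ℝ) = (v ^ 2)⁻¹ := by
    rw [rpow_neg hv.le, rpow_two]
  have hv3 : v ^ ((-2 : ℝ) - 1) = (v ^ 3)⁻¹ := by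
    norm_num [rpow_neg hv.le]
  have hv3' : (v ^ (-2 : ℝ)) ^ (-(3 : ℝ) / 2) = v ^ 3 := by
    rw [← rpow_mul hv.le]; norm_num
  have hv0 : (v : ℂ) ≠ 0 := ofReal_ne_zero.2 hv.ne'
  have hexp : (((v ^ 2)⁻¹ * x : ℝ) : ℂ) + 1 / (4 * (((v ^ 2)⁻¹ : ℝ) : ℂ))
      = (√x : ℂ) + ((1 / 2 * v - √x / v : ℝ) : ℂ) ^ 2 := by
    have hs : ((√x : ℝ) : ℂ) ^ 2 = x := by rw [← ofReal_pow, sq_sqrt hx]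
    push_cast
    field_simp
    linear_combination (-16 : ℂ) * hs
  unfold subordinationIntegrand
  rw [hv3', hv3, hv2, hexp, mul_add, Complex.exp_add]
  rw [abs_neg, abs_two, Complex.real_smul, smul_eq_mul]
  push_cast
  field_simp

theorem integrableOn_subordinationIntegrand {x : ℝ} (hx : 0 < x) {y : ℂ} (hy : 0 < y.re) :
    IntegrableOn (subordinationIntegrand y x) (Ioi 0) := by
  rw [← integrableOn_Ioi_comp_rpow_iff _ (by norm_num : (-2 : ℝ) ≠ 0)]
  refine IntegrableOn.congr_fun ?_
    (fun v hv => (subordinationIntegrand_rpow_neg_two hx.le y hv).symm) measurableSet_Ioi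
  exact ((integrable_cexp_neg_mul_sq hy).integrableOn_Ioi_comp_mul_sub_div
    (by norm_num : (0 : ℝ) < 1 / 2) (sqrt_pos.2 hx)).smul (2 * cexp (-y * √x))

theorem integral_subordinationIntegrand {x : ℝ} (hx : 0 < x) {y : ℂ} (hy : 0 < y.re) :
    ∫ r in Ioi 0, subordinationIntegrand y x r =
      2 * cexp (-y * √x) * ((π : ℂ) / y) ^ (1 / 2 : ℂ) := by
  rw [← integral_comp_rpow_Ioi _ (by norm_num : (-2 : ℝ) ≠ 0),
    setIntegral_congr_fun measurableSet_Ioi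
      (fun v hv => subordinationIntegrand_rpow_neg_two hx.le y hv),
    integral_smul, integral_Ioi_comp_mul_sub_div (by norm_num : (0 : ℝ) < 1 / 2)
      (sqrt_pos.2 hx) (integrable_cexp_neg_mul_sq hy) (fun w => by simp),
    integral_gaussian_complex hy]
  norm_num

theorem cpow_half_div_mul_integral_subordinationIntegrand {x : ℝ} (hx : 0 < x) {y : ℂ}
    (hy : 0 < y.re) :
    y ^ (1 / 2 : ℂ) / (2 * (√π : ℂ)) * ∫ r in Ioi 0, subordinationIntegrand y x r =
      cexp (-y * √x) := by
  have hπ : (√π : ℂ) ≠ 0 := ofReal_ne_zero.2 (sqrt_pos.2 pi_pos).ne'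
  rw [integral_subordinationIntegrand hx hy, div_mul_eq_mul_div, div_eq_iff (by simpa using hπ)]
  linear_combination 2 * cexp (-y * √x) * cpow_half_mul_pi_div_cpow_half hy

theorem halfwave_subordination_limit_general (x t : ℝ) (hx : 0 < x) :
    (∀ ε : ℝ, 0 < ε →
      IntegrableOn
        (fun r : ℝ => Complex.exp ((Complex.I * (t : ℂ) - (ε : ℂ)) * ((r * x : ℝ) + 1 / (4 * r))) *
          ((r ^ (-(3 : ℝ) / 2) : ℝ) : ℂ)) (Set.Ioi 0) volume) ∧
    Tendsto
      (fun ε : ℝ =>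
        ((ε : ℂ) - Complex.I * (t : ℂ)) ^ (1 / 2 : ℂ) / (2 * (Real.sqrt π : ℂ)) *
          ∫ r in Set.Ioi (0 : ℝ),
            Complex.exp ((Complex.I * (t : ℂ) - (ε : ℂ)) * ((r * x : ℝ) + 1 / (4 * r))) *
              ((r ^ (-(3 : ℝ) / 2) : ℝ) : ℂ))
      (𝓝[>] (0 : ℝ))
      (𝓝 (Complex.exp (Complex.I * (t : ℂ) * (Real.sqrt x : ℂ)))) := by
  have hre : ∀ ε : ℝ, 0 < ε → 0 < ((ε : ℂ) - I * t).re := fun ε hε => by simpa using hε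
  have hkernel : ∀ ε : ℝ, (fun r : ℝ => cexp ((I * t - ε) * ((r * x : ℝ) + 1 / (4 * r))) *
      ((r ^ (-(3 : ℝ) / 2) : ℝ) : ℂ)) = subordinationIntegrand (ε - I * t) x := fun ε => by
    funext r
    rw [subordinationIntegrand, neg_sub]
  simp only [hkernel]
  refine ⟨fun ε hε => integrableOn_subordinationIntegrand hx (hre ε hε), ?_⟩
  have hlim : Tendsto (fun ε : ℝ => cexp (-((ε : ℂ) - I * t) * √x)) (𝓝[>] 0)
      (𝓝 (cexp (I * t * √x))) := by
    have := ((by fun_prop : Continuous fun ε : ℝ => cexp (-((ε : ℂ) - I * t) * √x)).tendsto 0)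
    simpa using this.mono_left nhdsWithin_le_nhds
  exact hlim.congr' (eventually_nhdsWithin_of_forall fun ε hε =>
    (cpow_half_div_mul_integral_subordinationIntegrand hx (hre ε hε)).symm)

/-- **Limiting subordination representation of the half-wave multiplier.** For every real
`x > 0` and `t > 0`, each integral (for `ε > 0`) is absolutely convergent and
`lim_{ε→0⁺} (√(ε − it)/(2√π)) ∫₀^∞ e^{(it−ε)(rx + 1/(4r))} r^{-3/2} dr = e^{it√x}`,
where `√(ε−it) = (ε−it)^{1/2}` is the principal branch of the complex square root. -/
theorem halfwave_subordination_limit (x t : ℝ) (hx : 0 < x) (ht : 0 < t) :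
    (∀ ε : ℝ, 0 < ε →
      IntegrableOn
        (fun r : ℝ => Complex.exp ((Complex.I * (t : ℂ) - (ε : ℂ)) * ((r * x : ℝ) + 1 / (4 * r))) *
          ((r ^ (-(3 : ℝ) / 2) : ℝ) : ℂ)) (Set.Ioi 0) volume) ∧
    Tendsto
      (fun ε : ℝ =>
        ((ε : ℂ) - Complex.I * (t : ℂ)) ^ (1 / 2 : ℂ) / (2 * (Real.sqrt π : ℂ)) *
          ∫ r in Set.Ioi (0 : ℝ),
            Complex.exp ((Complex.I * (t : ℂ) - (ε : ℂ)) * ((r * x : ℝ) + 1 / (4 * r))) *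
              ((r ^ (-(3 : ℝ) / 2) : ℝ) : ℂ))
      (𝓝[>] (0 : ℝ))
      (𝓝 (Complex.exp (Complex.I * (t : ℂ) * (Real.sqrt x : ℂ)))) :=
  halfwave_subordination_limit_general x t hx
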